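/- Let X₁, …, Xₙ be ℝᵈ-valued random variables with E[‖Xᵢ‖²] < ∞, means μᵢ and covariance matrices Σᵢ, and set M = ∑ᵢ (μᵢ μᵢᵀ + Σᵢ). A unit vector u ∈ ℝᵈ minimizes the total expected squared reconstruction error ∑ᵢ E[‖Xᵢ − uuᵀ Xᵢ‖²] over all unit vectors if and only if u is an eigenvector of M whose eigenvalue is the largest eigenvalue of M. In particular, distributional PCA (the leading eigenvectors of M) minimizes the total reconstruction error, which for each i equals the squared 2-Wasserstein distance W₂²(Xᵢ, uuᵀXᵢ). -/

import Mathlib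

/-!
For a unit vector `v`, the rank-one reconstruction `vvᵀx` is the orthogonal projection `⟪v, x⟫ v`,
so `‖x - vvᵀx‖² = ‖x‖² - ⟪v, x⟫²`. Taking expectations, `E⟪v, Xᵢ⟫² = vᵀ E[XᵢXᵢᵀ] v` and
`E[XᵢXᵢᵀ] = μᵢμᵢᵀ + Σᵢ`, so the total error is `∑ᵢ E‖Xᵢ‖² - vᵀMv`. Minimizing the error is thus
maximizing the Rayleigh quotient of the symmetric matrix `M` on the unit sphere. A maximizer is
an eigenvector (Lagrange multipliers) whose eigenvalue dominates every other eigenvalue, since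
the Rayleigh quotient at a unit eigenvector is its eigenvalue. Conversely, the sphere is compact,
so a maximizer exists; its value is an eigenvalue, hence at most the top eigenvalue `t`, which is
the value at any unit eigenvector for `t`.
-/

open Matrix MeasureTheory ProbabilityTheory
open Metric Module.End
open scoped RealInnerProductSpace

section Rayleigh

variable {E : Type*} [NormedAddCommGroup E] [InnerProductSpace ℝ E]

lemma ContinuousLinearMap.reApplyInnerSelf_eq_of_eq_smul {T : E →L[ℝ] E} {u : E} (hu : ‖u‖ = 1)
    {t : ℝ} (hTu : T u = t • u) : T.reApplyInnerSelf u = t := by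
  simp [ContinuousLinearMap.reApplyInnerSelf, hTu, real_inner_smul_left, hu]

lemma Module.End.HasEigenvalue.le_reApplyInnerSelf_of_isMaxOn {T : E →L[ℝ] E} {t : ℝ}
    (ht : HasEigenvalue (T : E →ₗ[ℝ] E) t) {w : E}
    (hmax : IsMaxOn T.reApplyInnerSelf (sphere 0 1) w) : t ≤ T.reApplyInnerSelf w := by
  obtain ⟨x, hx, hx0⟩ := ht.exists_hasEigenvector
  have hxn : ‖‖x‖⁻¹ • x‖ = 1 := by simp [norm_smul, hx0]
  have hTx : T (‖x‖⁻¹ • x) = t • (‖x‖⁻¹ • x) := by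
    rw [map_smul, ← ContinuousLinearMap.coe_coe, mem_eigenspace_iff.mp hx, smul_comm]
  rw [← T.reApplyInnerSelf_eq_of_eq_smul hxn hTx]
  exact hmax (mem_sphere_zero_iff_norm.mpr hxn)

lemma IsSelfAdjoint.eq_smul_self_of_isMaxOn_sphere [CompleteSpace E] {T : E →L[ℝ] E}
    (hT : IsSelfAdjoint T) {u : E} (hu : ‖u‖ = 1)
    (hmax : IsMaxOn T.reApplyInnerSelf (sphere 0 1) u) :
    T u = T.reApplyInnerSelf u • u := by
  have h := hT.eq_smul_self_of_isLocalExtrOn (x₀ := u) (Or.inr (hu ▸ hmax).localize)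
  simpa [ContinuousLinearMap.rayleighQuotient, hu] using h

theorem IsSelfAdjoint.isMaxOn_sphere_iff [FiniteDimensional ℝ E] {T : E →L[ℝ] E}
    (hT : IsSelfAdjoint T) {u : E} (hu : ‖u‖ = 1) :
    IsMaxOn T.reApplyInnerSelf (sphere 0 1) u ↔
      ∃ t : ℝ, T u = t • u ∧ ∀ t', HasEigenvalue (T : E →ₗ[ℝ] E) t' → t' ≤ t := by
  constructor
  · intro hmax
    exact ⟨_, hT.eq_smul_self_of_isMaxOn_sphere hu hmax,
      fun _ ht' => ht'.le_reApplyInnerSelf_of_isMaxOn hmax⟩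
  · rintro ⟨t, hTu, htop⟩ v hv
    obtain ⟨w, hw, hwmax⟩ := (isCompact_sphere (0 : E) 1).exists_isMaxOn
      ⟨u, mem_sphere_zero_iff_norm.mpr hu⟩ T.reApplyInnerSelf_continuous.continuousOn
    have hw1 : ‖w‖ = 1 := mem_sphere_zero_iff_norm.mp hw
    have hw0 : w ≠ 0 := norm_ne_zero_iff.mp (by simp [hw1])
    have hw_eig : HasEigenvalue (T : E →ₗ[ℝ] E) (T.reApplyInnerSelf w) :=
      hasEigenvalue_of_hasEigenvector
        ⟨mem_eigenspace_iff.mpr (hT.eq_smul_self_of_isMaxOn_sphere hw1 hwmax), hw0⟩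
    calc T.reApplyInnerSelf v ≤ T.reApplyInnerSelf w := hwmax hv
      _ ≤ t := htop _ hw_eig
      _ = T.reApplyInnerSelf u := (T.reApplyInnerSelf_eq_of_eq_smul hu hTu).symm

end Rayleigh

namespace Matrix

variable {n : Type*} [Fintype n] [DecidableEq n]

lemma hasEigenvalue_toEuclideanLin_iff {𝕜 : Type*} [RCLike 𝕜] (A : Matrix n n 𝕜) (t : 𝕜) :
    HasEigenvalue (toEuclideanLin A) t ↔ ∃ v : n → 𝕜, v ≠ 0 ∧ A *ᵥ v = t • v := by
  rw [hasEigenvalue_iff, Submodule.ne_bot_iff]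
  constructor
  · rintro ⟨x, hx, hx0⟩
    refine ⟨WithLp.ofLp x, by simpa using hx0, ?_⟩
    simpa using congrArg WithLp.ofLp (mem_eigenspace_iff.mp hx)
  · rintro ⟨v, hv0, hv⟩
    refine ⟨WithLp.toLp 2 v, mem_eigenspace_iff.mpr ?_, by simpa using hv0⟩
    simp [hv]

lemma reApplyInnerSelf_toEuclideanCLM (A : Matrix n n ℝ) (x : EuclideanSpace ℝ n) :
    (toEuclideanCLM (𝕜 := ℝ) A).reApplyInnerSelf x = x ⬝ᵥ A *ᵥ x := by
  rw [ContinuousLinearMap.reApplyInnerSelf, RCLike.re_to_real, real_inner_comm,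
    inner_toEuclideanCLM]

theorem IsHermitian.forall_dotProduct_mulVec_le_iff {A : Matrix n n ℝ} (hA : A.IsHermitian)
    {u : EuclideanSpace ℝ n} (hu : ‖u‖ = 1) :
    (∀ v : EuclideanSpace ℝ n, ‖v‖ = 1 → v ⬝ᵥ A *ᵥ v ≤ u ⬝ᵥ A *ᵥ u) ↔
      ∃ t : ℝ, A *ᵥ u = t • u ∧ ∀ t', (∃ v : n → ℝ, v ≠ 0 ∧ A *ᵥ v = t' • v) → t' ≤ t := by
  have h := (hA.isSelfAdjoint.map (toEuclideanCLM (𝕜 := ℝ) (n := n))).isMaxOn_sphere_iff hu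
  simp only [IsMaxOn, IsMaxFilter, Filter.eventually_principal, mem_sphere_zero_iff_norm,
    reApplyInnerSelf_toEuclideanCLM, coe_toEuclideanCLM_eq_toEuclideanLin,
    hasEigenvalue_toEuclideanLin_iff] at h
  simp only [h, ← (WithLp.ofLp_injective 2).eq_iff, ofLp_toEuclideanCLM, WithLp.ofLp_smul]

end Matrix

section SecondMoment

variable {n : Type*} [Fintype n]

lemma norm_sub_vecMulVec_mulVec_sq {v : EuclideanSpace ℝ n} (hv : ‖v‖ = 1)
    (x : EuclideanSpace ℝ n) :
    ‖x - (WithLp.equiv 2 (n → ℝ)).symm (vecMulVec v v *ᵥ x)‖ ^ 2 = ‖x‖ ^ 2 - ⟪v, x⟫ ^ 2 := by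
  have hproj : (WithLp.equiv 2 (n → ℝ)).symm (vecMulVec v v *ᵥ x) = ⟪v, x⟫ • v := by
    ext j
    simp [vecMulVec_mulVec, EuclideanSpace.inner_eq_star_dotProduct, dotProduct_comm]
  rw [hproj, norm_sub_sq_real, real_inner_smul_right, norm_smul, hv, real_inner_comm]
  simp
  ring

variable {Ω : Type*} {mΩ : MeasurableSpace Ω} {P : Measure Ω} {X : Ω → EuclideanSpace ℝ n}

noncomputable def secondMoment (X : Ω → EuclideanSpace ℝ n) (P : Measure Ω) : Matrix n n ℝ :=
  of fun j k => ∫ ω, X ω j * X ω k ∂P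

omit [Fintype n] in
lemma secondMoment_isHermitian : (secondMoment X P).IsHermitian := by
  ext j k
  simp [secondMoment, mul_comm]

lemma dotProduct_secondMoment_mulVec (hX : MemLp X 2 P) (v : EuclideanSpace ℝ n) :
    v ⬝ᵥ secondMoment X P *ᵥ v = ∫ ω, ⟪v, X ω⟫ ^ 2 ∂P := by
  have hint (j k : n) : Integrable (fun ω => v j * v k * (X ω j * X ω k)) P :=
    ((hX.eval_piLp j).integrable_mul (hX.eval_piLp k)).const_mul _
  have hsq (ω : Ω) : ⟪v, X ω⟫ ^ 2 = ∑ j, ∑ k, v j * v k * (X ω j * X ω k) := by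
    simp only [PiLp.inner_apply, RCLike.inner_apply, conj_trivial, sq, Finset.sum_mul_sum]
    exact Finset.sum_congr rfl fun j _ => Finset.sum_congr rfl fun k _ => by ring
  simp_rw [hsq]
  rw [integral_finsetSum _ fun j _ => integrable_finsetSum _ fun k _ => hint j k]
  simp_rw [integral_finsetSum _ fun k _ => hint _ k, integral_const_mul]
  simp only [dotProduct, mulVec, secondMoment, of_apply, Finset.mul_sum]
  exact Finset.sum_congr rfl fun j _ => Finset.sum_congr rfl fun k _ => by ring

lemma secondMoment_eq_vecMulVec_add [IsProbabilityMeasure P] (hX : MemLp X 2 P) {m : n → ℝ}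
    (hm : ∀ j, m j = ∫ ω, X ω j ∂P) {C : Matrix n n ℝ}
    (hC : ∀ j k, C j k = ∫ ω, (X ω j - m j) * (X ω k - m k) ∂P) :
    secondMoment X P = vecMulVec m m + C := by
  ext j k
  have hcov := covariance_eq_sub (hX.eval_piLp j) (hX.eval_piLp k)
  simp only [covariance, ← hm, Pi.mul_apply] at hcov
  rw [secondMoment, of_apply, Matrix.add_apply, vecMulVec_apply, hC, hcov]
  ring

lemma integral_norm_sub_vecMulVec_mulVec_sq (hX : MemLp X 2 P) {v : EuclideanSpace ℝ n}
    (hv : ‖v‖ = 1) :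
    ∫ ω, ‖X ω - (WithLp.equiv 2 (n → ℝ)).symm (vecMulVec v v *ᵥ X ω)‖ ^ 2 ∂P
      = ∫ ω, ‖X ω‖ ^ 2 ∂P - v ⬝ᵥ secondMoment X P *ᵥ v := by
  simp_rw [norm_sub_vecMulVec_mulVec_sq hv, dotProduct_secondMoment_mulVec hX]
  exact integral_sub ((memLp_two_iff_integrable_sq_norm hX.1).mp hX)
    (hX.const_inner v).integrable_sq

end SecondMoment

/-- For a distributional dataset with PCA matrix `M = ∑ᵢ (μᵢ μᵢᵀ + Σᵢ)`, a unit
vector `u` minimizes the total expected squared reconstruction error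
`∑ᵢ E[‖Xᵢ − uuᵀ Xᵢ‖²]` (which equals `∑ᵢ W₂²(Xᵢ, uuᵀXᵢ)`) over all unit
vectors if and only if `u` is an eigenvector of `M` whose eigenvalue is the
largest eigenvalue of `M`. -/
theorem distributional_pca_minimizes_reconstruction_error
    (d n : ℕ) (Ω : Type*) [MeasureSpace Ω] [IsProbabilityMeasure (ℙ : Measure Ω)]
    (X : Fin n → Ω → EuclideanSpace ℝ (Fin d)) (hX : ∀ i, MemLp (X i) 2 ℙ)
    (μ : Fin n → Fin d → ℝ) (hμ : ∀ i j, μ i j = ∫ ω, X i ω j)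
    (Cov : Fin n → Matrix (Fin d) (Fin d) ℝ)
    (hCov : ∀ i j k, Cov i j k = ∫ ω, (X i ω j - μ i j) * (X i ω k - μ i k))
    (M : Matrix (Fin d) (Fin d) ℝ)
    (hM : M = ∑ i, (Matrix.vecMulVec (μ i) (μ i) + Cov i))
    (u : EuclideanSpace ℝ (Fin d)) (hu : ‖u‖ = 1) :
    (∀ v : EuclideanSpace ℝ (Fin d), ‖v‖ = 1 →
        ∑ i, ∫ ω, ‖X i ω - (WithLp.equiv 2 (Fin d → ℝ)).symm
            ((Matrix.vecMulVec u u).mulVec (X i ω))‖ ^ 2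
          ≤ ∑ i, ∫ ω, ‖X i ω - (WithLp.equiv 2 (Fin d → ℝ)).symm
            ((Matrix.vecMulVec v v).mulVec (X i ω))‖ ^ 2) ↔
    (∃ t : ℝ, M.mulVec u = t • u ∧
        ∀ t' : ℝ, (∃ v : Fin d → ℝ, v ≠ 0 ∧ M.mulVec v = t' • v) → t' ≤ t) := by
  have hM_moment : M = ∑ i, secondMoment (X i) ℙ := by
    simp only [hM, secondMoment_eq_vecMulVec_add (hX _) (hμ _) (hCov _)]
  have hM_herm : M.IsHermitian :=
    hM_moment ▸ isSelfAdjoint_sum _ fun i _ => secondMoment_isHermitian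
  have h_error (v : EuclideanSpace ℝ (Fin d)) (hv : ‖v‖ = 1) :
      ∑ i, ∫ ω, ‖X i ω - (WithLp.equiv 2 (Fin d → ℝ)).symm (vecMulVec v v *ᵥ X i ω)‖ ^ 2
        = (∑ i, ∫ ω, ‖X i ω‖ ^ 2) - v ⬝ᵥ M *ᵥ v := by
    simp only [integral_norm_sub_vecMulVec_mulVec_sq (hX _) hv, Finset.sum_sub_distrib,
      hM_moment, sum_mulVec, dotProduct_sum]
  rw [← hM_herm.forall_dotProduct_mulVec_le_iff hu]
  refine forall₂_congr fun v hv => ?_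
  rw [h_error u hu, h_error v hv, sub_le_sub_iff_left]
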